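/- arXiv:1603.06861 — 4 statements merged into one kernel-verified Lean document; each statement's English description precedes it below -/
import Mathlib

section
/- If each f_i : ℝ^p → ℝ is convex with L-Lipschitz continuous gradient, F(w) = (1/n) Σ_{i=1}^n f_i(w), and w* is a minimizer of F, then (1/n) Σ_{i=1}^n ‖∇f_i(w) − ∇f_i(w*)‖² ≤ 2L·(F(w) − F(w*)) for all w. -/
open scoped RealInnerProductSpace BigOperators

/-- Co-coercivity: for convex `f` with `L`-smooth inequality,
`‖g w − g w'‖² ≤ 2L (f w − f w' − ⟪g w', w − w'⟫)`. -/
lemma cocoercive_aux {p : ℕ} (L : ℝ) (hL : 0 < L)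
    (f : EuclideanSpace ℝ (Fin p) → ℝ)
    (g : EuclideanSpace ℝ (Fin p) → EuclideanSpace ℝ (Fin p))
    (hconv : ∀ w w', f w' + ⟪g w', w - w'⟫ ≤ f w)
    (hsmooth : ∀ w w', f w ≤ f w' + ⟪g w', w - w'⟫ + L / 2 * ‖w - w'‖ ^ 2)
    (w w' : EuclideanSpace ℝ (Fin p)) :
    ‖g w - g w'‖ ^ 2 ≤ 2 * L * (f w - f w' - ⟪g w', w - w'⟫) := by
  set d : EuclideanSpace ℝ (Fin p) := g w - g w' with hd
  set u : EuclideanSpace ℝ (Fin p) := w - (1 / L) • d with hu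
  have h1 := hconv u w'
  have h2 := hsmooth u w
  have hum : u - w = -((1 / L) • d) := by
    rw [hu]; abel
  have hgu : ⟪g w, u - w⟫ = -(1 / L) * ⟪g w, d⟫ := by
    rw [hum, inner_neg_right, real_inner_smul_right]; ring
  have hnu : ‖u - w‖ ^ 2 = (1 / L) ^ 2 * ‖d‖ ^ 2 := by
    rw [hum, norm_neg, norm_smul, mul_pow, Real.norm_eq_abs,
      abs_of_pos (by positivity : (0:ℝ) < 1 / L)]
  have huw' : ⟪g w', u - w'⟫ = ⟪g w', w - w'⟫ - (1 / L) * ⟪g w', d⟫ := by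
    have : u - w' = (w - w') - (1 / L) • d := by rw [hu]; abel
    rw [this, inner_sub_right, real_inner_smul_right]
  have hdd : ⟪g w, d⟫ - ⟪g w', d⟫ = ‖d‖ ^ 2 := by
    rw [← inner_sub_left, ← hd, real_inner_self_eq_norm_sq]
  rw [hgu, hnu] at h2
  rw [huw'] at h1
  have hL' : L ≠ 0 := ne_of_gt hL
  have e : L / 2 * ((1 / L) ^ 2 * ‖d‖ ^ 2) = 1 / (2 * L) * ‖d‖ ^ 2 := by
    field_simp
  rw [e] at h2
  have h3 := h1.trans h2
  have h4 := mul_le_mul_of_nonneg_left h3 hL.le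
  have e1 : L * (1 / L * ⟪g w', d⟫) = ⟪g w', d⟫ := by field_simp
  have e2 : L * (1 / L * ⟪g w, d⟫) = ⟪g w, d⟫ := by field_simp
  have e3 : L * (1 / (2 * L) * ‖d‖ ^ 2) = ‖d‖ ^ 2 / 2 := by field_simp
  nlinarith [h4, e1, e2, e3, hdd]

/-- If each `f i` is convex with `L`-Lipschitz gradient `g i`, `F` is their average and
`wstar` minimizes `F`, then `(1/n) Σ ‖∇f_i(w) − ∇f_i(w*)‖² ≤ 2L (F w − F w*)`. -/
theorem stmt_0 {p n : ℕ} (hn : 0 < n) (L : ℝ) (hL : 0 < L)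
    (f : Fin n → EuclideanSpace ℝ (Fin p) → ℝ)
    (g : Fin n → EuclideanSpace ℝ (Fin p) → EuclideanSpace ℝ (Fin p))
    (hconv : ∀ i w w', f i w' + ⟪g i w', w - w'⟫ ≤ f i w)
    (hsmooth : ∀ i w w',
      f i w ≤ f i w' + ⟪g i w', w - w'⟫ + L / 2 * ‖w - w'‖ ^ 2)
    (F : EuclideanSpace ℝ (Fin p) → ℝ)
    (hF : ∀ w, F w = (1 / n : ℝ) * ∑ i, f i w)
    (wstar : EuclideanSpace ℝ (Fin p))
    (hmin : ∀ w, F wstar ≤ F w) :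
    ∀ w, (1 / n : ℝ) * ∑ i, ‖g i w - g i wstar‖ ^ 2 ≤ 2 * L * (F w - F wstar) := by
  intro w
  have hn' : (0:ℝ) < n := by exact_mod_cast hn
  set s : EuclideanSpace ℝ (Fin p) := ∑ i, g i wstar with hs
  -- first derive s = 0
  have hs0 : s = 0 := by
    by_contra hne
    set t : ℝ := 1 / (n * L) with ht
    set v : EuclideanSpace ℝ (Fin p) := wstar - t • s with hv
    have hvw : v - wstar = -(t • s) := by rw [hv]; abel
    have hsum : ∑ i, f i v ≤ ∑ i, f i wstar + ⟪s, v - wstar⟫ +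
        (n : ℝ) * (L / 2 * ‖v - wstar‖ ^ 2) := by
      calc ∑ i, f i v ≤ ∑ i, (f i wstar + ⟪g i wstar, v - wstar⟫ +
              L / 2 * ‖v - wstar‖ ^ 2) :=
            Finset.sum_le_sum fun i _ => hsmooth i v wstar
        _ = ∑ i, f i wstar + ⟪s, v - wstar⟫ + (n : ℝ) * (L / 2 * ‖v - wstar‖ ^ 2) := by
            rw [Finset.sum_add_distrib, Finset.sum_add_distrib, hs, sum_inner]
            simp [Finset.sum_const, Finset.card_univ]
    have hinner : ⟪s, v - wstar⟫ = -t * ‖s‖ ^ 2 := by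
      rw [hvw, inner_neg_right, real_inner_smul_right, real_inner_self_eq_norm_sq]; ring
    have hnorm : ‖v - wstar‖ ^ 2 = t ^ 2 * ‖s‖ ^ 2 := by
      rw [hvw, norm_neg, norm_smul]
      have : |t| = t := abs_of_pos (by positivity)
      rw [Real.norm_eq_abs, this, mul_pow]
    have hFle : ∑ i, f i wstar ≤ ∑ i, f i v := by
      have := hmin v
      rw [hF, hF] at this
      have h1n : (0:ℝ) < 1 / n := by positivity
      exact le_of_mul_le_mul_left (by linarith [this]) h1n
    rw [hinner, hnorm] at hsum
    have hsnorm : 0 < ‖s‖ ^ 2 := by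
      have := norm_pos_iff.mpr hne
      positivity
    have htpos : 0 < t := by rw [ht]; positivity
    have ht2 : (n : ℝ) * (L / 2 * (t ^ 2 * ‖s‖ ^ 2)) = t / 2 * ‖s‖ ^ 2 := by
      rw [ht]; field_simp
    nlinarith [hsum, hFle, ht2, mul_pos htpos hsnorm]
  -- co-coercivity summed
  have hkey : ∑ i, ‖g i w - g i wstar‖ ^ 2 ≤
      2 * L * (∑ i, f i w - ∑ i, f i wstar - ⟪s, w - wstar⟫) := by
    calc ∑ i, ‖g i w - g i wstar‖ ^ 2
        ≤ ∑ i, 2 * L * (f i w - f i wstar - ⟪g i wstar, w - wstar⟫) :=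
          Finset.sum_le_sum fun i _ =>
            cocoercive_aux L hL (f i) (g i) (hconv i) (hsmooth i) w wstar
      _ = 2 * L * (∑ i, f i w - ∑ i, f i wstar - ⟪s, w - wstar⟫) := by
          rw [← Finset.mul_sum, hs, sum_inner]
          congr 1
          rw [Finset.sum_sub_distrib, Finset.sum_sub_distrib]
  rw [hs0] at hkey
  simp only [inner_zero_left, sub_zero] at hkey
  rw [hF, hF]
  have h1n : (0:ℝ) ≤ 1 / n := by positivity
  calc (1 / n : ℝ) * ∑ i, ‖g i w - g i wstar‖ ^ 2
      ≤ (1 / n : ℝ) * (2 * L * (∑ i, f i w - ∑ i, f i wstar)) :=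
        mul_le_mul_of_nonneg_left hkey h1n
    _ = 2 * L * ((1 / n : ℝ) * ∑ i, f i w - (1 / n : ℝ) * ∑ i, f i wstar) := by ring
end

section
/- Let i be uniform on {1,…,n}, and v = ∇f_i(w) − ∇f_i(w̃) + μ̃ for fixed w, w̃, μ̃ ∈ ℝ^p. If each f_i is convex with L-Lipschitz gradient and w* minimizes F = (1/n)Σf_i, then E[‖v‖²] ≤ 8L·(F(w) − F(w*) + F(w̃) − F(w*)) + 2‖μ̃‖². -/
open scoped RealInnerProductSpace BigOperators

lemma aux_key {p : ℕ} (L : ℝ) (hL : 0 < L) (f : EuclideanSpace ℝ (Fin p) → ℝ)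
    (g : EuclideanSpace ℝ (Fin p) → EuclideanSpace ℝ (Fin p))
    (hconv : ∀ w w', f w' + ⟪g w', w - w'⟫ ≤ f w)
    (hsmooth : ∀ w w', f w ≤ f w' + ⟪g w', w - w'⟫ + L / 2 * ‖w - w'‖ ^ 2)
    (u x : EuclideanSpace ℝ (Fin p)) :
    ‖g u - g x‖ ^ 2 ≤ 2 * L * (f u - f x - ⟪g x, u - x⟫) := by
  set d := g u - g x with hd
  have h1 := hsmooth (u - L⁻¹ • d) u
  have h2 := hconv (u - L⁻¹ • d) x
  have hz : u - L⁻¹ • d - u = -(L⁻¹ • d) := by abel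
  rw [hz] at h1
  have e1 : ⟪g u, -(L⁻¹ • d)⟫ = -(L⁻¹ * ⟪g u, d⟫) := by
    rw [inner_neg_right, real_inner_smul_right]
  have e2 : ‖-(L⁻¹ • d)‖ ^ 2 = L⁻¹ ^ 2 * ‖d‖ ^ 2 := by
    rw [norm_neg, norm_smul, mul_pow, Real.norm_eq_abs, sq_abs]
  rw [e1, e2] at h1
  have hzx : u - L⁻¹ • d - x = (u - x) - L⁻¹ • d := by abel
  have e3 : ⟪g x, u - L⁻¹ • d - x⟫ = ⟪g x, u - x⟫ - L⁻¹ * ⟪g x, d⟫ := by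
    rw [hzx, inner_sub_right, real_inner_smul_right]
  rw [e3] at h2
  have e4 : ⟪g u, d⟫ - ⟪g x, d⟫ = ‖d‖ ^ 2 := by
    rw [← inner_sub_left, ← hd, real_inner_self_eq_norm_sq]
  have hcomb : f x + (⟪g x, u - x⟫ - L⁻¹ * ⟪g x, d⟫) ≤
      f u + -(L⁻¹ * ⟪g u, d⟫) + L / 2 * (L⁻¹ ^ 2 * ‖d‖ ^ 2) := le_trans h2 h1
  have hL' : L⁻¹ > 0 := inv_pos.mpr hL
  have hLL : L * L⁻¹ = 1 := mul_inv_cancel₀ hL.ne'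
  have e5 : L / 2 * (L⁻¹ ^ 2 * ‖d‖ ^ 2) = L⁻¹ / 2 * ‖d‖ ^ 2 := by
    field_simp
  have h6 : L⁻¹ / 2 * ‖d‖ ^ 2 ≤ f u - f x - ⟪g x, u - x⟫ := by nlinarith [hcomb, e4, e5]
  have h7 := mul_le_mul_of_nonneg_left h6 (by positivity : (0:ℝ) ≤ 2 * L)
  calc ‖d‖ ^ 2 = 2 * L * (L⁻¹ / 2 * ‖d‖ ^ 2) := by field_simp
    _ ≤ 2 * L * (f u - f x - ⟪g x, u - x⟫) := h7

lemma aux_avg {p n : ℕ} (hn : 0 < n) (L : ℝ) (hL : 0 < L)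
    (f : Fin n → EuclideanSpace ℝ (Fin p) → ℝ)
    (g : Fin n → EuclideanSpace ℝ (Fin p) → EuclideanSpace ℝ (Fin p))
    (hconv : ∀ i w w', f i w' + ⟪g i w', w - w'⟫ ≤ f i w)
    (hsmooth : ∀ i w w',
      f i w ≤ f i w' + ⟪g i w', w - w'⟫ + L / 2 * ‖w - w'‖ ^ 2)
    (F : EuclideanSpace ℝ (Fin p) → ℝ)
    (hF : ∀ w, F w = (1 / n : ℝ) * ∑ i, f i w)
    (wstar : EuclideanSpace ℝ (Fin p))
    (hmin : ∀ w, F wstar ≤ F w)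
    (u : EuclideanSpace ℝ (Fin p)) :
    (1 / n : ℝ) * ∑ i, ‖g i u - g i wstar‖ ^ 2 ≤ 2 * L * (F u - F wstar) := by
  have hn' : (0:ℝ) < n := Nat.cast_pos.mpr hn
  set d := u - wstar with hd
  set G : EuclideanSpace ℝ (Fin p) := ∑ i, g i wstar with hG
  -- first-order optimality: ⟪G, d⟫ ≥ 0
  have hopt : 0 ≤ ⟪G, d⟫ := by
    by_contra hneg
    push_neg at hneg
    set c := ⟪G, d⟫ with hc
    have hdpos : (0:ℝ) < ‖d‖ ^ 2 := by
      rcases eq_or_ne d 0 with h0 | hd0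
      · rw [hc, h0, inner_zero_right] at hneg; exact absurd hneg (lt_irrefl 0)
      · exact pow_pos (norm_pos_iff.mpr hd0) 2
    set t : ℝ := -c / (n * L * ‖d‖ ^ 2) with ht
    have hsum : ∑ i, f i (wstar + t • d)
        ≤ ∑ i, f i wstar + t * c + n * (L / 2 * (t ^ 2 * ‖d‖ ^ 2)) := by
      have hterm : ∀ i : Fin n, f i (wstar + t • d) ≤
          f i wstar + t * ⟪g i wstar, d⟫ + L / 2 * (t ^ 2 * ‖d‖ ^ 2) := by
        intro i
        have h := hsmooth i (wstar + t • d) wstar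
        have hrw : wstar + t • d - wstar = t • d := by abel
        rw [hrw, real_inner_smul_right, norm_smul, mul_pow, Real.norm_eq_abs, sq_abs] at h
        exact h
      calc ∑ i, f i (wstar + t • d)
          ≤ ∑ i, (f i wstar + t * ⟪g i wstar, d⟫ + L / 2 * (t ^ 2 * ‖d‖ ^ 2)) :=
            Finset.sum_le_sum fun i _ => hterm i
        _ = ∑ i, f i wstar + t * c + n * (L / 2 * (t ^ 2 * ‖d‖ ^ 2)) := by
            rw [Finset.sum_add_distrib, Finset.sum_add_distrib, Finset.sum_const,
              Finset.card_univ, Fintype.card_fin, nsmul_eq_mul, ← Finset.mul_sum,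
              hc, hG, sum_inner]
    have hFt : F (wstar + t • d) ≤ F wstar + (1 / n : ℝ) * (t * c)
        + L / 2 * (t ^ 2 * ‖d‖ ^ 2) := by
      rw [hF, hF]
      have := mul_le_mul_of_nonneg_left hsum (by positivity : (0:ℝ) ≤ 1 / n)
      calc (1 / n : ℝ) * ∑ i, f i (wstar + t • d) ≤ _ := this
        _ = (1 / n : ℝ) * ∑ i, f i wstar + (1 / n : ℝ) * (t * c)
            + L / 2 * (t ^ 2 * ‖d‖ ^ 2) := by field_simp
    have hge := hmin (wstar + t • d)
    have hkey : 0 ≤ (1 / n : ℝ) * (t * c) + L / 2 * (t ^ 2 * ‖d‖ ^ 2) := by linarith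
    have heq : (1 / n : ℝ) * (t * c) + L / 2 * (t ^ 2 * ‖d‖ ^ 2)
        = -(c ^ 2) / (2 * (n ^ 2 * L * ‖d‖ ^ 2)) := by
      rw [ht]; field_simp; ring
    have hc2 : 0 < c ^ 2 := by nlinarith [hneg]
    have hneg2 : -(c ^ 2) / (2 * (n ^ 2 * L * ‖d‖ ^ 2)) < 0 :=
      div_neg_of_neg_of_pos (by linarith) (by positivity)
    linarith [hkey, heq, hneg2]
  -- per-index bound and averaging
  have hkey : ∀ i : Fin n, ‖g i u - g i wstar‖ ^ 2
      ≤ 2 * L * (f i u - f i wstar - ⟪g i wstar, d⟫) :=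
    fun i => aux_key L hL (f i) (g i) (hconv i) (hsmooth i) u wstar
  have hsum : ∑ i, ‖g i u - g i wstar‖ ^ 2
      ≤ 2 * L * (∑ i, f i u - ∑ i, f i wstar - ⟪G, d⟫) := by
    calc ∑ i, ‖g i u - g i wstar‖ ^ 2
        ≤ ∑ i, 2 * L * (f i u - f i wstar - ⟪g i wstar, d⟫) :=
          Finset.sum_le_sum fun i _ => hkey i
      _ = 2 * L * (∑ i, f i u - ∑ i, f i wstar - ⟪G, d⟫) := by
          rw [← Finset.mul_sum, Finset.sum_sub_distrib, Finset.sum_sub_distrib,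
            hG, sum_inner]
    
  have h2 := mul_le_mul_of_nonneg_left hsum (by positivity : (0:ℝ) ≤ 1 / n)
  have hGd : 0 ≤ (1 / n : ℝ) * (2 * L * ⟪G, d⟫) := by positivity
  rw [hF, hF]
  nlinarith [h2, hGd]

/-- Variance bound for the SVRG-type direction: for a uniformly random index `i` and
`v = ∇f_i(w) − ∇f_i(w̃) + μ̃`, `E‖v‖² ≤ 8L(F(w) − F(w*) + F(w̃) − F(w*)) + 2‖μ̃‖²`. -/
theorem stmt_4 {p n : ℕ} (hn : 0 < n) (L : ℝ) (hL : 0 < L)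
    (f : Fin n → EuclideanSpace ℝ (Fin p) → ℝ)
    (g : Fin n → EuclideanSpace ℝ (Fin p) → EuclideanSpace ℝ (Fin p))
    (hconv : ∀ i w w', f i w' + ⟪g i w', w - w'⟫ ≤ f i w)
    (hsmooth : ∀ i w w',
      f i w ≤ f i w' + ⟪g i w', w - w'⟫ + L / 2 * ‖w - w'‖ ^ 2)
    (F : EuclideanSpace ℝ (Fin p) → ℝ)
    (hF : ∀ w, F w = (1 / n : ℝ) * ∑ i, f i w)
    (wstar : EuclideanSpace ℝ (Fin p))
    (hmin : ∀ w, F wstar ≤ F w)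
    (w wtilde mu : EuclideanSpace ℝ (Fin p)) :
    (1 / n : ℝ) * ∑ i, ‖g i w - g i wtilde + mu‖ ^ 2
      ≤ 8 * L * (F w - F wstar + F wtilde - F wstar) + 2 * ‖mu‖ ^ 2 := by
  have hn' : (0:ℝ) < n := Nat.cast_pos.mpr hn
  have hpt : ∀ i : Fin n, ‖g i w - g i wtilde + mu‖ ^ 2
      ≤ 4 * ‖g i w - g i wstar‖ ^ 2 + 4 * ‖g i wtilde - g i wstar‖ ^ 2
        + 2 * ‖mu‖ ^ 2 := by
    intro i
    set a := g i w - g i wstar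
    set b := g i wtilde - g i wstar
    have hab : g i w - g i wtilde + mu = (a - b) + mu := by
      simp only [a, b]; abel
    rw [hab]
    have h1 : ‖a - b + mu‖ ≤ ‖a - b‖ + ‖mu‖ := norm_add_le _ _
    have h2 : ‖a - b‖ ≤ ‖a‖ + ‖b‖ := norm_sub_le _ _
    nlinarith [norm_nonneg (a - b + mu), norm_nonneg (a - b), norm_nonneg a,
      norm_nonneg b, norm_nonneg mu, sq_nonneg (‖a‖ - ‖b‖),
      sq_nonneg (‖a - b‖ - ‖mu‖)]
  have hsum : ∑ i, ‖g i w - g i wtilde + mu‖ ^ 2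
      ≤ 4 * ∑ i, ‖g i w - g i wstar‖ ^ 2 + 4 * ∑ i, ‖g i wtilde - g i wstar‖ ^ 2
        + n * (2 * ‖mu‖ ^ 2) := by
    calc ∑ i, ‖g i w - g i wtilde + mu‖ ^ 2
        ≤ ∑ i, (4 * ‖g i w - g i wstar‖ ^ 2 + 4 * ‖g i wtilde - g i wstar‖ ^ 2
            + 2 * ‖mu‖ ^ 2) := Finset.sum_le_sum fun i _ => hpt i
      _ = 4 * ∑ i, ‖g i w - g i wstar‖ ^ 2
            + 4 * ∑ i, ‖g i wtilde - g i wstar‖ ^ 2 + n * (2 * ‖mu‖ ^ 2) := by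
          rw [Finset.sum_add_distrib, Finset.sum_add_distrib, Finset.sum_const,
            Finset.card_univ, Fintype.card_fin, nsmul_eq_mul, ← Finset.mul_sum,
            ← Finset.mul_sum]
  have havg := mul_le_mul_of_nonneg_left hsum (by positivity : (0:ℝ) ≤ 1 / n)
  have h1 := aux_avg hn L hL f g hconv hsmooth F hF wstar hmin w
  have h2 := aux_avg hn L hL f g hconv hsmooth F hF wstar hmin wtilde
  have hmu : (1 / n : ℝ) * (n * (2 * ‖mu‖ ^ 2)) = 2 * ‖mu‖ ^ 2 := by
    field_simp
  nlinarith [havg, h1, h2, hmu, hL.le]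
end

section
/- Let S be a uniformly random size-s subset of {1,…,n} and μ̃_S = (1/s) Σ_{i∈S} ∇f_i(w̃). If each f_i is convex with L-Lipschitz gradient, w* minimizes F = (1/n)Σf_i, and ‖∇f_i(w*)‖ ≤ ξ for all i, then E_S[‖μ̃_S‖²] ≤ (4L/s)·(F(w̃) − F(w*)) + 2ξ²/s + 4L(F(w̃) − F(w*)). -/
/-!
Write `xᵢ = ∇fᵢ(w̃)` and `yᵢ = ∇fᵢ(w*)`. A gradient step from the minimiser `w*` shows
`∑ yᵢ = 0`, and co-coercivity of smooth convex functions bounds `∑ ‖xᵢ - yᵢ‖²` by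
`2Ln (F(w̃) - F(w*))`. Split `∑_{i∈S} xᵢ = ∑_{i∈S} (xᵢ - yᵢ) + ∑_{i∈S} yᵢ`: the first part is
handled by Cauchy–Schwarz, the second by sampling without replacement — every pair `i ≠ j` lies in
the same number of `s`-subsets, so with `∑ yᵢ = 0` the cross terms only decrease
`E‖∑_{i∈S} yᵢ‖²`. This gives even `E‖μ̃_S‖² ≤ 4L (F(w̃) - F(w*)) + 2ξ²/s`.
-/

open scoped RealInnerProductSpace BigOperators
open Finset

theorem choose_mul_eq_mul_choose_sub_one {n s : ℕ} (hs : 1 ≤ s) :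
    n.choose s * s = n * (n - 1).choose (s - 1) := by
  obtain ⟨k, rfl⟩ : ∃ k, s = k + 1 := ⟨s - 1, by omega⟩
  rcases Nat.eq_zero_or_eq_succ_pred n with rfl | hn
  · simp
  · rw [hn]
    exact (Nat.add_one_mul_choose_eq _ k).symm

section NormBounds

variable {ι E : Type*} [NormedAddCommGroup E]

theorem norm_add_sq_le_two_mul (a b : E) : ‖a + b‖ ^ 2 ≤ 2 * (‖a‖ ^ 2 + ‖b‖ ^ 2) :=
  (pow_le_pow_left₀ (norm_nonneg _) (norm_add_le a b) 2).trans add_sq_le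

theorem norm_sum_sq_le_card_mul (S : Finset ι) (v : ι → E) :
    ‖∑ i ∈ S, v i‖ ^ 2 ≤ #S * ∑ i ∈ S, ‖v i‖ ^ 2 :=
  (pow_le_pow_left₀ (norm_nonneg _) (norm_sum_le S v) 2).trans sq_sum_le_card_mul_sum_sq

theorem norm_sq_smul_sum_le [NormedSpace ℝ E] (S : Finset ι) (x y : ι → E) :
    ‖(1 / #S : ℝ) • ∑ i ∈ S, x i‖ ^ 2
      ≤ 2 / #S * ∑ i ∈ S, ‖x i - y i‖ ^ 2 + 2 / #S ^ 2 * ‖∑ i ∈ S, y i‖ ^ 2 := by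
  have hsplit : ∑ i ∈ S, x i = ∑ i ∈ S, (x i - y i) + ∑ i ∈ S, y i := by
    rw [← sum_add_distrib]; simp
  have hadd := norm_add_sq_le_two_mul (∑ i ∈ S, (x i - y i)) (∑ i ∈ S, y i)
  have hsum := norm_sum_sq_le_card_mul S (fun i => x i - y i)
  rw [norm_smul, mul_pow, Real.norm_eq_abs, sq_abs, hsplit]
  calc (1 / #S : ℝ) ^ 2 * ‖∑ i ∈ S, (x i - y i) + ∑ i ∈ S, y i‖ ^ 2
      ≤ (1 / #S : ℝ) ^ 2 * (2 * (#S * ∑ i ∈ S, ‖x i - y i‖ ^ 2 + ‖∑ i ∈ S, y i‖ ^ 2)) := by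
        gcongr; linarith
    _ = _ := by
        rcases eq_or_ne (#S : ℝ) 0 with h0 | h0
        · simp [h0]
        · field_simp

end NormBounds

section Smooth

variable {E : Type*} [NormedAddCommGroup E] [InnerProductSpace ℝ E]

theorem eq_zero_of_forall_le_of_le_quadratic {φ : E → ℝ} {v w₀ : E} {L : ℝ} (hL : 0 < L)
    (hmin : ∀ w, φ w₀ ≤ φ w) (hsmooth : ∀ w, φ w ≤ φ w₀ + ⟪v, w - w₀⟫ + L / 2 * ‖w - w₀‖ ^ 2) :
    v = 0 := by
  have h := (hmin (w₀ - L⁻¹ • v)).trans (hsmooth (w₀ - L⁻¹ • v))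
  rw [sub_sub_cancel_left, inner_neg_right, real_inner_smul_right, real_inner_self_eq_norm_sq,
    norm_neg, norm_smul, mul_pow, Real.norm_eq_abs, sq_abs] at h
  have hv : L⁻¹ / 2 * ‖v‖ ^ 2 ≤ 0 := by
    have : L / 2 * (L⁻¹ ^ 2 * ‖v‖ ^ 2) = L⁻¹ / 2 * ‖v‖ ^ 2 := by field_simp
    linarith
  have : ‖v‖ ^ 2 ≤ 0 := nonpos_of_mul_nonpos_right hv (by positivity)
  exact norm_eq_zero.mp (pow_eq_zero_iff two_ne_zero |>.mp (le_antisymm this (sq_nonneg _)))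

theorem norm_grad_sub_sq_le {φ : E → ℝ} {g : E → E} {L : ℝ} (hL : 0 < L)
    (hconv : ∀ w w', φ w' + ⟪g w', w - w'⟫ ≤ φ w)
    (hsmooth : ∀ w w', φ w ≤ φ w' + ⟪g w', w - w'⟫ + L / 2 * ‖w - w'‖ ^ 2) (u v : E) :
    ‖g u - g v‖ ^ 2 ≤ 2 * L * (φ u - φ v - ⟪g v, u - v⟫) := by
  set h := g u - g v
  -- a gradient step from `u` for `w ↦ φ w - ⟪g v, w⟫`, whose minimum is at `v`
  set z := u - L⁻¹ • h
  have hlow := hconv z v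
  have hup := hsmooth z u
  rw [show z - v = (u - v) - L⁻¹ • h by simp only [z]; abel, inner_sub_right,
    real_inner_smul_right] at hlow
  rw [show z - u = -(L⁻¹ • h) by simp only [z]; abel, inner_neg_right, real_inner_smul_right,
    norm_neg, norm_smul, mul_pow, Real.norm_eq_abs, sq_abs] at hup
  have hh : L⁻¹ * ⟪g u, h⟫ - L⁻¹ * ⟪g v, h⟫ = L⁻¹ * ‖h‖ ^ 2 := by
    rw [← mul_sub, ← inner_sub_left, real_inner_self_eq_norm_sq]
  have key : L⁻¹ / 2 * ‖h‖ ^ 2 ≤ φ u - φ v - ⟪g v, u - v⟫ := by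
    have : L / 2 * (L⁻¹ ^ 2 * ‖h‖ ^ 2) = L⁻¹ / 2 * ‖h‖ ^ 2 := by field_simp
    linarith
  calc ‖h‖ ^ 2 = 2 * L * (L⁻¹ / 2 * ‖h‖ ^ 2) := by field_simp
    _ ≤ _ := by gcongr

variable {ι : Type*} [Fintype ι] {f : ι → E → ℝ} {g : ι → E → E} {L : ℝ}

theorem sum_grad_eq_zero_of_forall_le [Nonempty ι] (hL : 0 < L) {w₀ : E}
    (hsmooth : ∀ i w, f i w ≤ f i w₀ + ⟪g i w₀, w - w₀⟫ + L / 2 * ‖w - w₀‖ ^ 2)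
    (hmin : ∀ w, ∑ i, f i w₀ ≤ ∑ i, f i w) :
    ∑ i, g i w₀ = 0 := by
  refine eq_zero_of_forall_le_of_le_quadratic (L := Fintype.card ι * L) (by positivity) hmin
    fun w => (sum_le_sum fun i _ => hsmooth i w).trans_eq ?_
  rw [sum_add_distrib, sum_add_distrib, sum_inner, sum_const, card_univ, nsmul_eq_mul]
  ring

theorem sum_norm_grad_sub_sq_le (hL : 0 < L)
    (hconv : ∀ i w w', f i w' + ⟪g i w', w - w'⟫ ≤ f i w)
    (hsmooth : ∀ i w w', f i w ≤ f i w' + ⟪g i w', w - w'⟫ + L / 2 * ‖w - w'‖ ^ 2)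
    (u : E) {v : E} (hv : ∑ i, g i v = 0) :
    ∑ i, ‖g i u - g i v‖ ^ 2 ≤ 2 * L * (∑ i, f i u - ∑ i, f i v) := by
  calc ∑ i, ‖g i u - g i v‖ ^ 2 ≤ ∑ i, 2 * L * (f i u - f i v - ⟪g i v, u - v⟫) :=
        sum_le_sum fun i _ => norm_grad_sub_sq_le hL (hconv i) (hsmooth i) u v
    _ = _ := by
        rw [← mul_sum, sum_sub_distrib, sum_sub_distrib, ← sum_inner, hv, inner_zero_left,
          sub_zero]

end Smooth

section Sampling

variable {ι M E : Type*} [Fintype ι] [DecidableEq ι] [AddCommMonoid M]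
  [NormedAddCommGroup E] [InnerProductSpace ℝ E]

theorem sum_sum_mem_eq_sum_card_filter_smul (P : Finset (Finset ι)) (a : ι → M) :
    ∑ S ∈ P, ∑ i ∈ S, a i = ∑ i, #{S ∈ P | i ∈ S} • a i := by
  rw [sum_comm' (t' := univ) (s' := fun i => {S ∈ P | i ∈ S}) (by simp)]
  simp only [sum_const]

theorem sum_sum_sum_mem_eq_sum_card_filter_smul (P : Finset (Finset ι)) (c : ι → ι → M) :
    ∑ S ∈ P, ∑ i ∈ S, ∑ j ∈ S, c i j = ∑ i, ∑ j, #{S ∈ P | i ∈ S ∧ j ∈ S} • c i j := by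
  rw [sum_comm' (t' := univ) (s' := fun i => {S ∈ P | i ∈ S}) (by simp)]
  refine sum_congr rfl fun i _ => ?_
  simp only [sum_sum_mem_eq_sum_card_filter_smul, filter_filter]

theorem sum_norm_sq_sum_eq_of_card_filter_mem {P : Finset (Finset ι)} {c₁ c₂ : ℕ}
    (h₁ : ∀ i, #{S ∈ P | i ∈ S} = c₁) (h₂ : ∀ i j, i ≠ j → #{S ∈ P | i ∈ S ∧ j ∈ S} = c₂)
    (y : ι → E) :
    ∑ S ∈ P, ‖∑ i ∈ S, y i‖ ^ 2 = c₂ * ‖∑ i, y i‖ ^ 2 + (c₁ - c₂ : ℝ) * ∑ i, ‖y i‖ ^ 2 := by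
  have hcount : ∀ i j,
      (#{S ∈ P | i ∈ S ∧ j ∈ S} : ℝ) = c₂ + if i = j then (c₁ - c₂ : ℝ) else 0 := by
    intro i j
    split_ifs with hij
    · subst hij; simp [h₁]
    · simp [h₂ i j hij]
  simp only [← real_inner_self_eq_norm_sq, sum_inner, inner_sum]
  rw [sum_sum_sum_mem_eq_sum_card_filter_smul]
  simp only [nsmul_eq_mul, hcount, add_mul, sum_add_distrib, ite_mul, zero_mul, sum_ite_eq,
    mem_univ, if_true, ← mul_sum]

theorem card_filter_mem_powersetCard_univ {s : ℕ} (hs : 1 ≤ s) (i : ι) :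
    #{S ∈ powersetCard s (univ : Finset ι) | i ∈ S} = (Fintype.card ι - 1).choose (s - 1) := by
  simpa using card_filter_powersetCard_subset {i} univ s (subset_univ _) (by simpa using hs)

theorem card_filter_mem_mem_powersetCard_univ (s : ℕ) {i j : ι} (hij : i ≠ j) :
    #{S ∈ powersetCard s (univ : Finset ι) | i ∈ S ∧ j ∈ S}
      = if 2 ≤ s then (Fintype.card ι - 2).choose (s - 2) else 0 := by
  have hpair : #({i, j} : Finset ι) = 2 := card_pair hij
  have hmem : ∀ S : Finset ι, (i ∈ S ∧ j ∈ S) ↔ {i, j} ⊆ S := by simp [insert_subset_iff]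
  simp_rw [hmem]
  split_ifs with h2s
  · simpa [hpair] using card_filter_powersetCard_subset {i, j} univ s (subset_univ _) (by omega)
  · refine card_eq_zero.mpr (filter_eq_empty_iff.mpr fun S hS hsub => h2s ?_)
    rw [← hpair, ← (mem_powersetCard.mp hS).2]
    exact card_le_card hsub

theorem sum_powersetCard_sum {s : ℕ} (hs : 1 ≤ s) (a : ι → ℝ) :
    ∑ S ∈ powersetCard s univ, ∑ i ∈ S, a i
      = (Fintype.card ι - 1).choose (s - 1) * ∑ i, a i := by
  simp [sum_sum_mem_eq_sum_card_filter_smul, card_filter_mem_powersetCard_univ hs, mul_sum]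

theorem sum_powersetCard_norm_sq_sum_le {s : ℕ} (hs : 1 ≤ s) {y : ι → E} (hy : ∑ i, y i = 0) :
    ∑ S ∈ powersetCard s univ, ‖∑ i ∈ S, y i‖ ^ 2
      ≤ (Fintype.card ι - 1).choose (s - 1) * ∑ i, ‖y i‖ ^ 2 := by
  rw [sum_norm_sq_sum_eq_of_card_filter_mem (card_filter_mem_powersetCard_univ hs)
    (fun _ _ => card_filter_mem_mem_powersetCard_univ s) y, hy, norm_zero]
  nlinarith [sum_nonneg fun i (_ : i ∈ univ) => sq_nonneg ‖y i‖,
    Nat.cast_nonneg (α := ℝ) (if 2 ≤ s then (Fintype.card ι - 2).choose (s - 2) else 0)]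

theorem average_norm_sq_smul_sum_powersetCard_le {s : ℕ} (hs : 1 ≤ s)
    (hsn : s ≤ Fintype.card ι) (x y : ι → E) (hy : ∑ i, y i = 0) :
    ((Fintype.card ι).choose s : ℝ)⁻¹ *
        ∑ S ∈ powersetCard s univ, ‖(1 / s : ℝ) • ∑ i ∈ S, x i‖ ^ 2
      ≤ 2 / Fintype.card ι * ∑ i, ‖x i - y i‖ ^ 2
          + 2 / (s * Fintype.card ι) * ∑ i, ‖y i‖ ^ 2 := by
  set n := Fintype.card ι
  have hrel : (n.choose s : ℝ) * s = n * (n - 1).choose (s - 1) := by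
    exact_mod_cast choose_mul_eq_mul_choose_sub_one hs
  have hN : (0 : ℝ) < n.choose s := by exact_mod_cast Nat.choose_pos hsn
  have hs' : (0 : ℝ) < s := by exact_mod_cast hs
  have hn : (0 : ℝ) < n := by exact_mod_cast hs.trans hsn
  have hpoint : ∑ S ∈ powersetCard s univ, ‖(1 / s : ℝ) • ∑ i ∈ S, x i‖ ^ 2
      ≤ 2 / s * ∑ S ∈ powersetCard s univ, ∑ i ∈ S, ‖x i - y i‖ ^ 2
          + 2 / s ^ 2 * ∑ S ∈ powersetCard s univ, ‖∑ i ∈ S, y i‖ ^ 2 := by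
    rw [mul_sum, mul_sum, ← sum_add_distrib]
    refine sum_le_sum fun S hS => ?_
    simpa only [(mem_powersetCard.mp hS).2] using norm_sq_smul_sum_le S x y
  calc ((n.choose s : ℝ))⁻¹ * ∑ S ∈ powersetCard s univ, ‖(1 / s : ℝ) • ∑ i ∈ S, x i‖ ^ 2
      ≤ (n.choose s : ℝ)⁻¹ * (2 / s * ((n - 1).choose (s - 1) * ∑ i, ‖x i - y i‖ ^ 2)
          + 2 / s ^ 2 * ((n - 1).choose (s - 1) * ∑ i, ‖y i‖ ^ 2)) := by
        rw [← sum_powersetCard_sum hs]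
        gcongr
        exact hpoint.trans (by gcongr; exact sum_powersetCard_norm_sq_sum_le hs hy)
    _ = _ := by
        field_simp
        linear_combination -(s * ∑ i, ‖x i - y i‖ ^ 2 + ∑ i, ‖y i‖ ^ 2) * hrel

end Sampling

/-- Second-moment bound on the surrogate gradient:
`E_S‖μ̃_S‖² ≤ (4L/s)(F(w̃) − F(w*)) + 2ξ²/s + 4L(F(w̃) − F(w*))`. -/
theorem stmt_9 {p n : ℕ} (hn : 0 < n) (s : ℕ) (hs : 1 ≤ s) (hsn : s ≤ n)
    (L ξ : ℝ) (hL : 0 < L)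
    (f : Fin n → EuclideanSpace ℝ (Fin p) → ℝ)
    (g : Fin n → EuclideanSpace ℝ (Fin p) → EuclideanSpace ℝ (Fin p))
    (hconv : ∀ i w w', f i w' + ⟪g i w', w - w'⟫ ≤ f i w)
    (hsmooth : ∀ i w w',
      f i w ≤ f i w' + ⟪g i w', w - w'⟫ + L / 2 * ‖w - w'‖ ^ 2)
    (F : EuclideanSpace ℝ (Fin p) → ℝ)
    (hF : ∀ w, F w = (1 / n : ℝ) * ∑ i, f i w)
    (wstar : EuclideanSpace ℝ (Fin p))
    (hmin : ∀ w, F wstar ≤ F w)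
    (hxi : ∀ i, ‖g i wstar‖ ≤ ξ)
    (wtilde : EuclideanSpace ℝ (Fin p)) :
    ((n.choose s : ℝ))⁻¹ *
        ∑ S ∈ Finset.powersetCard s (Finset.univ : Finset (Fin n)),
          ‖(1 / s : ℝ) • ∑ i ∈ S, g i wtilde‖ ^ 2
      ≤ (4 * L / s) * (F wtilde - F wstar) + 2 * ξ ^ 2 / s
        + 4 * L * (F wtilde - F wstar) := by
  have : Nonempty (Fin n) := ⟨⟨0, hn⟩⟩
  have hsum (w) : ∑ i, f i w = n * F w := by rw [hF]; field_simp
  have hgrad : ∑ i, g i wstar = 0 :=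
    sum_grad_eq_zero_of_forall_le hL (fun i w => hsmooth i w wstar)
      fun w => by rw [hsum, hsum]; gcongr; exact hmin w
  have hcoco := sum_norm_grad_sub_sq_le hL hconv hsmooth wtilde hgrad
  have hbound : ∑ i, ‖g i wstar‖ ^ 2 ≤ n * ξ ^ 2 := by
    simpa using sum_le_sum fun i (_ : i ∈ univ) => pow_le_pow_left₀ (norm_nonneg _) (hxi i) 2
  have hgap : 0 ≤ F wtilde - F wstar := sub_nonneg.mpr (hmin wtilde)
  have havg := average_norm_sq_smul_sum_powersetCard_le hs (by simpa using hsn)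
    (fun i => g i wtilde) (fun i => g i wstar) hgrad
  rw [Fintype.card_fin] at havg
  rw [hsum, hsum] at hcoco
  calc _ ≤ _ := havg
    _ ≤ 2 / n * (2 * L * (n * F wtilde - n * F wstar)) + 2 / (s * n) * (n * ξ ^ 2) := by
        gcongr
    _ = 4 * L * (F wtilde - F wstar) + 2 * ξ ^ 2 / s := by field_simp; ring
    _ ≤ _ := by
        have : 0 ≤ 4 * L / s * (F wtilde - F wstar) := by positivity
        linarith
end

section
/- One-step SVRG-type descent bound: let each f_i be convex with L-Lipschitz gradient, F = (1/n)Σf_i with minimizer w*, and fix w̃, μ̃_S ∈ ℝ^p. For i uniform on {1,…,n} set v = ∇f_i(w) − ∇f_i(w̃) + μ̃_S and w' = w − η v. Then E_i[‖w' − w*‖²] ≤ ‖w − w*‖² − 2η⟨w − w*, ∇F(w) − ∇F(w̃) + μ̃_S⟩ + 8Lη²(F(w) − F(w*) + F(w̃) − F(w*)) + 2η²‖μ̃_S‖². -/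
open scoped RealInnerProductSpace BigOperators

section Aux

variable {E : Type*} [NormedAddCommGroup E] [InnerProductSpace ℝ E]

lemma aux_sq_norm_add_le (a b : E) : ‖a + b‖ ^ 2 ≤ 2 * ‖a‖ ^ 2 + 2 * ‖b‖ ^ 2 := by
  have h := norm_add_sq_real a b
  have h2 := real_inner_le_norm a b
  nlinarith [sq_nonneg (‖a‖ - ‖b‖)]

lemma aux_cocoercive {L : ℝ} (hL : 0 < L) (f : E → ℝ) (g : E → E)
    (hconv : ∀ w w', f w' + ⟪g w', w - w'⟫ ≤ f w)
    (hsmooth : ∀ w w', f w ≤ f w' + ⟪g w', w - w'⟫ + L / 2 * ‖w - w'‖ ^ 2)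
    (x y : E) : ‖g y - g x‖ ^ 2 ≤ 2 * L * (f y - f x - ⟪g x, y - x⟫) := by
  set z := y - L⁻¹ • (g y - g x) with hz
  have h1 := hconv z x
  have h2 := hsmooth z y
  have hzy : z - y = -(L⁻¹ • (g y - g x)) := by rw [hz]; abel
  have hzx : z - x = (y - x) - L⁻¹ • (g y - g x) := by rw [hz]; abel
  rw [hzy, inner_neg_right, real_inner_smul_right, norm_neg, norm_smul,
    Real.norm_eq_abs, abs_of_pos (inv_pos.mpr hL)] at h2
  rw [hzx, inner_sub_right, real_inner_smul_right] at h1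
  have hsplit : ⟪g y, g y - g x⟫ - ⟪g x, g y - g x⟫ = ‖g y - g x‖ ^ 2 := by
    rw [← inner_sub_left, real_inner_self_eq_norm_sq]
  have h3 : L⁻¹ * ⟪g y, g y - g x⟫ - L⁻¹ * ⟪g x, g y - g x⟫
      = L⁻¹ * ‖g y - g x‖ ^ 2 := by rw [← mul_sub, hsplit]
  have h4 : L / 2 * (L⁻¹ * ‖g y - g x‖) ^ 2 = (2*L)⁻¹ * ‖g y - g x‖ ^ 2 := by
    field_simp
  have h5 : L⁻¹ * ‖g y - g x‖ ^ 2 = 2 * ((2*L)⁻¹ * ‖g y - g x‖ ^ 2) := by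
    field_simp
  have hkey : (2*L)⁻¹ * ‖g y - g x‖ ^ 2 ≤ f y - f x - ⟪g x, y - x⟫ := by
    linarith
  calc ‖g y - g x‖ ^ 2 = 2*L*((2*L)⁻¹ * ‖g y - g x‖ ^ 2) := by field_simp
    _ ≤ 2*L*(f y - f x - ⟪g x, y - x⟫) :=
        mul_le_mul_of_nonneg_left hkey (by positivity)

end Aux

set_option maxHeartbeats 1000000 in
/-- One-step SVRG-type descent bound: with `v = ∇f_i(w) − ∇f_i(w̃) + μ̃_S` and
`w' = w − η v`, the expectation over the uniform index `i` satisfies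
`E‖w' − w*‖² ≤ ‖w − w*‖² − 2η⟨w − w*, ∇F(w) − ∇F(w̃) + μ̃_S⟩
  + 8Lη²(F(w) − F(w*) + F(w̃) − F(w*)) + 2η²‖μ̃_S‖²`. -/
theorem stmt_18 {p n : ℕ} (hn : 0 < n) (L η : ℝ) (hL : 0 < L) (hη : 0 < η)
    (f : Fin n → EuclideanSpace ℝ (Fin p) → ℝ)
    (g : Fin n → EuclideanSpace ℝ (Fin p) → EuclideanSpace ℝ (Fin p))
    (hconv : ∀ i w w', f i w' + ⟪g i w', w - w'⟫ ≤ f i w)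
    (hsmooth : ∀ i w w',
      f i w ≤ f i w' + ⟪g i w', w - w'⟫ + L / 2 * ‖w - w'‖ ^ 2)
    (F : EuclideanSpace ℝ (Fin p) → ℝ)
    (hF : ∀ w, F w = (1 / n : ℝ) * ∑ i, f i w)
    (gradF : EuclideanSpace ℝ (Fin p) → EuclideanSpace ℝ (Fin p))
    (hgradF : ∀ w, gradF w = (1 / n : ℝ) • ∑ i, g i w)
    (wstar : EuclideanSpace ℝ (Fin p))
    (hmin : ∀ w, F wstar ≤ F w)
    (w wtilde muS : EuclideanSpace ℝ (Fin p)) :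
    (1 / n : ℝ) * ∑ i, ‖(w - η • (g i w - g i wtilde + muS)) - wstar‖ ^ 2
      ≤ ‖w - wstar‖ ^ 2
        - 2 * η * ⟪w - wstar, gradF w - gradF wtilde + muS⟫
        + 8 * L * η ^ 2 * (F w - F wstar + F wtilde - F wstar)
        + 2 * η ^ 2 * ‖muS‖ ^ 2 := by
  have hn' : (0:ℝ) < n := by exact_mod_cast hn
  have h1n : (1/(n:ℝ)) * (n:ℝ) = 1 := by
    rw [one_div, inv_mul_cancel₀ hn'.ne']
  -- averaged smoothness of F
  have Fsmooth : ∀ x y : EuclideanSpace ℝ (Fin p),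
      F x ≤ F y + ⟪gradF y, x - y⟫ + L / 2 * ‖x - y‖ ^ 2 := by
    intro x y
    have hsum : ∑ i, f i x ≤ ∑ i, (f i y + ⟪g i y, x - y⟫ + L / 2 * ‖x - y‖ ^ 2) :=
      Finset.sum_le_sum fun i _ => hsmooth i x y
    rw [Finset.sum_add_distrib, Finset.sum_add_distrib, Finset.sum_const,
      Finset.card_univ, Fintype.card_fin, nsmul_eq_mul] at hsum
    have key := mul_le_mul_of_nonneg_left hsum (by positivity : (0:ℝ) ≤ 1/n)
    rw [hF, hF, hgradF, real_inner_smul_left, sum_inner]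
    have hdist : (1/(n:ℝ)) * ((∑ i, f i y) + (∑ i, ⟪g i y, x - y⟫)
          + (n:ℝ) * (L / 2 * ‖x - y‖ ^ 2))
        = (1/(n:ℝ)) * (∑ i, f i y) + (1/(n:ℝ)) * (∑ i, ⟪g i y, x - y⟫)
          + L / 2 * ‖x - y‖ ^ 2 := by
      linear_combination (L / 2 * ‖x - y‖ ^ 2) * h1n
    linarith [key, hdist]
  -- gradient at the minimizer vanishes
  have hgs : gradF wstar = 0 := by
    have h1 := hmin (wstar - L⁻¹ • gradF wstar)
    have h2 := Fsmooth (wstar - L⁻¹ • gradF wstar) wstar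
    have heq : wstar - L⁻¹ • gradF wstar - wstar = -(L⁻¹ • gradF wstar) := by abel
    rw [heq, inner_neg_right, real_inner_smul_right, real_inner_self_eq_norm_sq,
      norm_neg, norm_smul, Real.norm_eq_abs, abs_of_pos (inv_pos.mpr hL)] at h2
    have h4 : L / 2 * (L⁻¹ * ‖gradF wstar‖) ^ 2 = (2*L)⁻¹ * ‖gradF wstar‖ ^ 2 := by
      field_simp
    have h5 : L⁻¹ * ‖gradF wstar‖ ^ 2 = 2 * ((2*L)⁻¹ * ‖gradF wstar‖ ^ 2) := by
      field_simp
    have hpos : (0:ℝ) < (2*L)⁻¹ := by positivity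
    have hns : ‖gradF wstar‖ ^ 2 ≤ 0 := by nlinarith
    have : ‖gradF wstar‖ = 0 := by nlinarith [norm_nonneg (gradF wstar)]
    exact norm_eq_zero.mp this
  have hsumgs : ∑ i, g i wstar = 0 := by
    have h := (hgradF wstar).symm.trans hgs
    have hne : (1/(n:ℝ)) ≠ 0 := by positivity
    exact (smul_eq_zero.mp h).resolve_left hne
  -- averaged cocoercivity at wstar
  have avg_co : ∀ y : EuclideanSpace ℝ (Fin p),
      (1/(n:ℝ)) * ∑ i, ‖g i y - g i wstar‖ ^ 2 ≤ 2*L*(F y - F wstar) := by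
    intro y
    have hsum : ∑ i, ‖g i y - g i wstar‖ ^ 2
        ≤ ∑ i, (2*L*(f i y - f i wstar - ⟪g i wstar, y - wstar⟫)) :=
      Finset.sum_le_sum fun i _ =>
        aux_cocoercive hL (f i) (g i) (hconv i) (hsmooth i) wstar y
    have hsi : ∑ i, ⟪g i wstar, y - wstar⟫ = 0 := by
      rw [← sum_inner, hsumgs, inner_zero_left]
    have key := mul_le_mul_of_nonneg_left hsum (by positivity : (0:ℝ) ≤ 1/n)
    calc (1/(n:ℝ)) * ∑ i, ‖g i y - g i wstar‖ ^ 2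
        ≤ (1/(n:ℝ)) * ∑ i, (2*L*(f i y - f i wstar - ⟪g i wstar, y - wstar⟫)) := key
      _ = (1/(n:ℝ)) * (2*L*((∑ i, f i y) - (∑ i, f i wstar) - 0)) := by
          rw [← Finset.mul_sum, Finset.sum_sub_distrib, Finset.sum_sub_distrib, hsi]
      _ = 2*L*(F y - F wstar) := by rw [hF, hF]; ring
  -- pointwise expansion
  have expand : ∀ i, ‖(w - η • (g i w - g i wtilde + muS)) - wstar‖ ^ 2
      = ‖w - wstar‖^2 - 2*η*⟪w - wstar, g i w - g i wtilde + muS⟫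
        + η^2 * ‖g i w - g i wtilde + muS‖^2 := by
    intro i
    have h : (w - η • (g i w - g i wtilde + muS)) - wstar
        = (w - wstar) - η • (g i w - g i wtilde + muS) := by abel
    rw [h, norm_sub_sq_real, real_inner_smul_right, norm_smul, Real.norm_eq_abs,
      mul_pow, sq_abs]
    ring
  -- averaged inner product
  have inner_avg : (1/(n:ℝ)) * ∑ i, ⟪w - wstar, g i w - g i wtilde + muS⟫
      = ⟪w - wstar, gradF w - gradF wtilde + muS⟫ := by
    rw [hgradF, hgradF]
    simp only [inner_add_right, inner_sub_right, real_inner_smul_right, inner_sum]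
    rw [Finset.sum_add_distrib, Finset.sum_sub_distrib, Finset.sum_const,
      Finset.card_univ, Fintype.card_fin, nsmul_eq_mul]
    field_simp
  -- variance-style bound on the average of ‖v i‖²
  have normv : ∀ i, ‖g i w - g i wtilde + muS‖^2
      ≤ 4*‖g i w - g i wstar‖^2 + 4*‖g i wtilde - g i wstar‖^2 + 2*‖muS‖^2 := by
    intro i
    have h1 := aux_sq_norm_add_le (g i w - g i wtilde) muS
    have h2 := aux_sq_norm_add_le (g i w - g i wstar) (-(g i wtilde - g i wstar))
    have he : g i w - g i wstar + -(g i wtilde - g i wstar) = g i w - g i wtilde := by abel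
    rw [he, norm_neg] at h2
    linarith
  have S_bound : (1/(n:ℝ)) * ∑ i, ‖g i w - g i wtilde + muS‖^2
      ≤ 8*L*(F w - F wstar) + 8*L*(F wtilde - F wstar) + 2*‖muS‖^2 := by
    have hsum : ∑ i, ‖g i w - g i wtilde + muS‖^2
        ≤ ∑ i, (4*‖g i w - g i wstar‖^2 + 4*‖g i wtilde - g i wstar‖^2 + 2*‖muS‖^2) :=
      Finset.sum_le_sum fun i _ => normv i
    rw [Finset.sum_add_distrib, Finset.sum_add_distrib, Finset.sum_const,
      Finset.card_univ, Fintype.card_fin, nsmul_eq_mul,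
      ← Finset.mul_sum, ← Finset.mul_sum] at hsum
    have key := mul_le_mul_of_nonneg_left hsum (by positivity : (0:ℝ) ≤ 1/n)
    have hw := avg_co w
    have hwt := avg_co wtilde
    have hdist : (1/(n:ℝ)) * (4 * (∑ i, ‖g i w - g i wstar‖^2)
          + 4 * (∑ i, ‖g i wtilde - g i wstar‖^2) + (n:ℝ) * (2*‖muS‖^2))
        = 4 * ((1/(n:ℝ)) * ∑ i, ‖g i w - g i wstar‖^2)
          + 4 * ((1/(n:ℝ)) * ∑ i, ‖g i wtilde - g i wstar‖^2) + 2*‖muS‖^2 := by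
      linear_combination (2*‖muS‖^2) * h1n
    rw [hdist] at key
    linarith
  -- put it all together
  have main_eq : (1/(n:ℝ)) * ∑ i, ‖(w - η • (g i w - g i wtilde + muS)) - wstar‖ ^ 2
      = ‖w - wstar‖^2 - 2*η*⟪w - wstar, gradF w - gradF wtilde + muS⟫
        + η^2 * ((1/(n:ℝ)) * ∑ i, ‖g i w - g i wtilde + muS‖^2) := by
    simp_rw [expand]
    rw [Finset.sum_add_distrib, Finset.sum_sub_distrib, Finset.sum_const,
      Finset.card_univ, Fintype.card_fin, nsmul_eq_mul,
      ← Finset.mul_sum, ← Finset.mul_sum, ← inner_avg]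
    linear_combination (‖w - wstar‖ ^ 2) * h1n
  rw [main_eq]
  nlinarith [mul_le_mul_of_nonneg_left S_bound (sq_nonneg η)]
end
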